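/- arXiv:2310.15798 — 2 statements merged into one kernel-verified Lean document; each statement's English description precedes it below -/
import Mathlib

section
/- Let m ≥ 1 be a natural number and let x be a real number satisfying 2m < x < (4m + 3 + √(24m + 1))/2. Then (x − 2m) · (x² − (4m+3)·x + 4m² + 2) < 0. (Hence any N for which n ≥ N guarantees positivity of the third elementary symmetric function of −I_m ⊕ I_{n−m} must satisfy N > (4m + 3 + √(24m + 1))/2.) -/
/-- If `m ≥ 1` and `x` is a real number with `2m < x < (4m + 3 + √(24m + 1))/2`, then
`(x - 2m)(x² - (4m+3) x + 4m² + 2) < 0`. -/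
theorem cubic_neg_of_lt_upper_root (m : ℕ) (hm : 1 ≤ m) (x : ℝ)
    (h1 : 2 * (m : ℝ) < x)
    (h2 : x < (4 * (m : ℝ) + 3 + Real.sqrt (24 * (m : ℝ) + 1)) / 2) :
    (x - 2 * (m : ℝ)) *
      (x ^ 2 - (4 * (m : ℝ) + 3) * x + 4 * (m : ℝ) ^ 2 + 2) < 0 := by
  have hm1 : (1 : ℝ) ≤ m := by exact_mod_cast hm
  set s := Real.sqrt (24 * (m : ℝ) + 1) with hs
  have hs2 : s ^ 2 = 24 * (m : ℝ) + 1 := Real.sq_sqrt (by nlinarith)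
  have hs3 : (3 : ℝ) ≤ s := by
    have : Real.sqrt 9 ≤ s := Real.sqrt_le_sqrt (by nlinarith)
    rwa [show (9:ℝ) = 3^2 by norm_num, Real.sqrt_sq (by norm_num)] at this
  have hq : x ^ 2 - (4 * (m : ℝ) + 3) * x + 4 * (m : ℝ) ^ 2 + 2 < 0 := by
    have hlow : (4 * (m : ℝ) + 3 - s) / 2 < x := by nlinarith
    nlinarith [mul_pos (sub_pos.2 hlow) (sub_pos.2 h2)]
  nlinarith [sub_pos.2 h1]
end

section
/- Let k ≥ 1 and n > 2k be natural numbers, let d ≥ 2 be a natural number, and let u : Fin d → ℝ be a function with u_j > 0 for all j. Then (∑_{j=1}^{d} u_j) · (∑_{j=1}^{d} u_j^{(n+2k)/(n−2k)}) < (∑_{j=1}^{d} u_j)² · (∑_{j=1}^{d} u_j^{2n/(n−2k)})^{2k/n}, where all powers are real powers and the exponents are the indicated real ratios. -/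
/-!
Hölder's inequality with the conjugate exponents `n / (2k)` and `q = n / (n - 2k)`, applied to
`u^{4k/(n-2k)} · u`, bounds `∑ u^{(n+2k)/(n-2k)}` by `(∑ u^{2n/(n-2k)})^{2k/n} · ‖u‖_q`.
Since `q > 1` and there are at least two positive terms, `‖u‖_q < ‖u‖_1 = ∑ u` strictly:
`u_j^q = u_j · u_j^{q-1} < u_j · (∑ u)^{q-1}` for every `j`.
-/

open Finset Real

theorem sum_rpow_lt_rpow_sum {ι : Type*} {s : Finset ι} {f : ι → ℝ} {p : ℝ}
    (hf : ∀ i ∈ s, 0 < f i) (hs : 1 < #s) (hp : 1 < p) :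
    ∑ i ∈ s, f i ^ p < (∑ i ∈ s, f i) ^ p := by
  have hS : 0 < ∑ i ∈ s, f i := sum_pos hf (card_pos.mp (by omega))
  have hlt : ∀ i ∈ s, f i < ∑ j ∈ s, f j := by
    intro i hi
    obtain ⟨j, hj, hji⟩ : ∃ j ∈ s, j ≠ i := exists_mem_ne hs i
    exact single_lt_sum hji hi hj (hf j hj) fun k hk _ => (hf k hk).le
  calc ∑ i ∈ s, f i ^ p
      = ∑ i ∈ s, f i ^ (p - 1) * f i := sum_congr rfl fun i hi => by
        rw [← rpow_add_one (hf i hi).ne', sub_add_cancel]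
    _ < ∑ i ∈ s, (∑ j ∈ s, f j) ^ (p - 1) * f i :=
        sum_lt_sum_of_nonempty (card_pos.mp (by omega)) fun i hi =>
          mul_lt_mul_of_pos_right
            (rpow_lt_rpow (hf i hi).le (hlt i hi) (by linarith)) (hf i hi)
    _ = (∑ i ∈ s, f i) ^ p := by
        rw [← mul_sum, ← rpow_add_one hS.ne', sub_add_cancel]

theorem rpow_sum_rpow_one_div_lt_sum {ι : Type*} {s : Finset ι} {f : ι → ℝ} {p : ℝ}
    (hf : ∀ i ∈ s, 0 < f i) (hs : 1 < #s) (hp : 1 < p) :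
    (∑ i ∈ s, f i ^ p) ^ (1 / p) < ∑ i ∈ s, f i := by
  rw [one_div, rpow_inv_lt_iff_of_pos (sum_nonneg fun i hi => rpow_nonneg (hf i hi).le p)
    (sum_nonneg fun i hi => (hf i hi).le) (by linarith)]
  exact sum_rpow_lt_rpow_sum hf hs hp

theorem inner_lt_Lp_mul_sum_of_pos {ι : Type*} {s : Finset ι} {f g : ι → ℝ} {p q : ℝ}
    (hpq : p.HolderConjugate q) (hf : ∀ i ∈ s, 0 < f i) (hg : ∀ i ∈ s, 0 < g i)
    (hs : 1 < #s) :
    ∑ i ∈ s, f i * g i < (∑ i ∈ s, f i ^ p) ^ (1 / p) * ∑ i ∈ s, g i := by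
  have hfp : 0 < (∑ i ∈ s, f i ^ p) ^ (1 / p) :=
    rpow_pos_of_pos (sum_pos (fun i hi => rpow_pos_of_pos (hf i hi) p)
      (card_pos.mp (by omega))) _
  calc ∑ i ∈ s, f i * g i
      ≤ (∑ i ∈ s, f i ^ p) ^ (1 / p) * (∑ i ∈ s, g i ^ q) ^ (1 / q) :=
        inner_le_Lp_mul_Lq_of_nonneg s hpq (fun i hi => (hf i hi).le) fun i hi => (hg i hi).le
    _ < (∑ i ∈ s, f i ^ p) ^ (1 / p) * ∑ i ∈ s, g i :=
        mul_lt_mul_of_pos_left (rpow_sum_rpow_one_div_lt_sum hg hs hpq.symm.lt) hfp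

/-- The key strict inequality in the proof of the Aubin Lemma for the `Q`-curvature of
order `2k`: for `k ≥ 1`, `n > 2k`, `d ≥ 2`, and `u_j > 0`,
`(∑ u_j) * (∑ u_j ^ ((n+2k)/(n-2k))) < (∑ u_j)² * (∑ u_j ^ (2n/(n-2k))) ^ (2k/n)`,
where all powers are real powers. -/
theorem sum_mul_sum_rpow_lt (k n d : ℕ) (hk : 1 ≤ k) (hn : 2 * k < n)
    (hd : 2 ≤ d) (u : Fin d → ℝ) (hu : ∀ j, 0 < u j) :
    (∑ j, u j) * (∑ j, u j ^ (((n : ℝ) + 2 * k) / ((n : ℝ) - 2 * k)))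
      < (∑ j, u j) ^ 2 *
          (∑ j, u j ^ (2 * (n : ℝ) / ((n : ℝ) - 2 * k))) ^ (2 * (k : ℝ) / (n : ℝ)) := by
  have hk0 : (0 : ℝ) < 2 * k := by
    have : (1 : ℝ) ≤ k := by exact_mod_cast hk
    linarith
  have hm : (0 : ℝ) < n - 2 * k := by
    have : (2 * k : ℝ) < n := by exact_mod_cast hn
    linarith
  have hn0 : (n : ℝ) ≠ 0 := (by linarith : (0 : ℝ) < n).ne'
  have hpq : ((n : ℝ) / (2 * k)).HolderConjugate (n / (n - 2 * k)) := by
    rw [holderConjugate_iff, lt_div_iff₀ hk0, inv_div, inv_div]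
    exact ⟨by linarith, by field_simp; ring⟩
  have key := inner_lt_Lp_mul_sum_of_pos hpq (s := univ)
    (f := fun j => u j ^ (4 * k / ((n : ℝ) - 2 * k))) (g := u)
    (fun j _ => rpow_pos_of_pos (hu j) _) (fun j _ => hu j) (by simpa using Nat.lt_of_succ_le hd)
  have hprod : ∀ j, u j ^ (4 * k / ((n : ℝ) - 2 * k)) * u j
      = u j ^ (((n : ℝ) + 2 * k) / ((n : ℝ) - 2 * k)) := fun j => by
    rw [← rpow_add_one (hu j).ne', div_add_one hm.ne']
    congr 2
    ring
  have hpow : ∀ j, (u j ^ (4 * k / ((n : ℝ) - 2 * k))) ^ ((n : ℝ) / (2 * k))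
      = u j ^ (2 * (n : ℝ) / ((n : ℝ) - 2 * k)) := fun j => by
    rw [← rpow_mul (hu j).le]
    congr 1
    field_simp
    ring
  simp only [hprod, hpow, one_div_div] at key
  rw [sq, mul_assoc]
  have hS : 0 < ∑ j, u j := sum_pos (fun j _ => hu j) (univ_nonempty_iff.mpr ⟨⟨0, by omega⟩⟩)
  exact mul_lt_mul_of_pos_left (by linarith) hS
end
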